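/- The even predicate rule is non-terminating in context: starting from the goal even(N) ∧ even(s(N)), the rule even(X) ⇔ X = s(Y) | Y = s(Z) ∧ even(Z) admits an infinite computation. Formally, in a transition system where a state is a multiset of atoms even(t) together with accumulated equations over terms, and a transition picks an atom even(t) with the accumulated equations entailing t = s(u) for some term u, replaces it by even(v) and adds the equation u = s(v) for a fresh variable v, the initial state {even(N), even(s(N))} (with empty equations) has an infinite transition sequence. -/

import Mathlib

/-- Terms over the constant 0, the unary constructor s, and countably many variables. -/
inductive Trm : Type
  | zero : Trm
  | s : Trm → Trm
  | var : ℕ → Trm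
deriving DecidableEq

/-- Application of a substitution (homomorphic extension of a variable assignment). -/
def Trm.subst (θ : ℕ → Trm) : Trm → Trm
  | .zero => .zero
  | .s t => .s (t.subst θ)
  | .var n => θ n

/-- The variables occurring in a term. -/
def Trm.vars : Trm → Set ℕ
  | .zero => ∅
  | .s t => t.vars
  | .var n => {n}

/-- A substitution satisfies a set of equations. -/
def Sat (θ : ℕ → Trm) (E : Set (Trm × Trm)) : Prop :=
  ∀ p ∈ E, p.1.subst θ = p.2.subst θ

/-- Entailment of an equation from a set of equations in the free term algebra. -/
def Entails (E : Set (Trm × Trm)) (t u : Trm) : Prop :=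
  ∀ θ : ℕ → Trm, Sat θ E → t.subst θ = u.subst θ

/-- A state: a multiset of atoms even(t), represented by their argument terms, together
with the accumulated equations over terms. -/
abbrev EState := Multiset Trm × Set (Trm × Trm)

/-- One transition for the rule even(X) ⇔ X = s(Y) | Y = s(Z) ∧ even(Z): pick an atom
even(t) with the accumulated equations entailing t = s(u) for some term u, replace it by
even(v) for a fresh variable v and add the equation u = s(v). -/
def EvenStep (s1 s2 : EState) : Prop :=
  ∃ t ∈ s1.1, ∃ u : Trm, Entails s1.2 t (Trm.s u) ∧
    ∃ v : ℕ,
      (∀ a ∈ s1.1, v ∉ a.vars) ∧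
      (∀ p ∈ s1.2, v ∉ p.1.vars ∧ v ∉ p.2.vars) ∧ v ∉ u.vars ∧
      s2 = (s1.1.erase t + {Trm.var v}, insert (u, Trm.s (Trm.var v)) s1.2)

open Trm

theorem Entails.of_mem {E : Set (Trm × Trm)} {t u : Trm} (h : (t, u) ∈ E) : Entails E t u :=
  fun _ hθ => hθ _ h

theorem Trm.notMem_vars_var {m n : ℕ} (h : m ≠ n) : m ∉ (var n).vars := h

def chainEqs (n : ℕ) : Set (Trm × Trm) :=
  (fun k => (var k, s (var (k + 1)))) '' Set.Iio n

theorem chainEqs_zero : chainEqs 0 = ∅ := by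
  simp [chainEqs]

theorem chainEqs_succ (n : ℕ) :
    chainEqs (n + 1) = insert (var n, s (var (n + 1))) (chainEqs n) := by
  rw [chainEqs, chainEqs, ← Order.succ_eq_add_one, Order.Iio_succ_eq_insert, Set.image_insert_eq]
  rfl

theorem entails_chainEqs {k n : ℕ} (hk : k < n) : Entails (chainEqs n) (var k) (s (var (k + 1))) :=
  Entails.of_mem ⟨k, hk, rfl⟩

theorem notMem_vars_of_mem_chainEqs {n : ℕ} {p : Trm × Trm} (hp : p ∈ chainEqs n) :
    n + 1 ∉ p.1.vars ∧ n + 1 ∉ p.2.vars := by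
  obtain ⟨k, hk, rfl⟩ := hp
  exact ⟨notMem_vars_var (by grind), notMem_vars_var (by grind)⟩

/-- The infinite run: after the first step, which rewrites `even(s(x₀))`, the state `n + 1` is
`even(xₙ) ∧ even(xₙ₊₁)`, and the last equation `xₙ = s(xₙ₊₁)` makes `even(xₙ)` reducible. -/
def evenRun : ℕ → EState
  | 0 => ({var 0, s (var 0)}, ∅)
  | n + 1 => ({var n, var (n + 1)}, chainEqs (n + 1))

theorem evenStep_evenRun_zero : EvenStep (evenRun 0) (evenRun 1) := by
  refine ⟨s (var 0), by simp [evenRun], var 0, fun _ _ => rfl, 1, ?_, by simp [evenRun], ?_, ?_⟩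
  · simp [evenRun, Trm.vars]
  · exact notMem_vars_var one_ne_zero
  · simp [evenRun, chainEqs_succ, chainEqs_zero]

theorem evenStep_evenRun_succ (n : ℕ) : EvenStep (evenRun (n + 1)) (evenRun (n + 2)) := by
  refine ⟨var n, by simp [evenRun], var (n + 1), entails_chainEqs n.lt_add_one, n + 2,
    ?_, fun _ => notMem_vars_of_mem_chainEqs, ?_, ?_⟩
  · simp [evenRun, Trm.vars]
  · exact notMem_vars_var (by omega)
  · simp [evenRun, chainEqs_succ (n + 1)]

/-- the even rule is non-terminating in context: starting from the goal
even(N) ∧ even(s(N)) (with empty accumulated equations), there is an infinite transition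
sequence. -/
theorem even_nonterminating_from_context :
    ∃ f : ℕ → EState,
      f 0 = (({Trm.var 0, Trm.s (Trm.var 0)} : Multiset Trm), (∅ : Set (Trm × Trm))) ∧
      ∀ i : ℕ, EvenStep (f i) (f (i + 1)) := by
  refine ⟨evenRun, rfl, ?_⟩
  rintro (_ | n)
  exacts [evenStep_evenRun_zero, evenStep_evenRun_succ n]
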